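/- arXiv:2304.06261 — 2 statements merged into one kernel-verified Lean document; each statement's English description precedes it below -/
import Mathlib

section
/- On a flat complex torus, for each w ∈ Γ* with eigenvalue λ = 4π²|w|², the pair of eigenfunctions φ_w, ψ_w satisfies L(φ_w) + L(ψ_w) = 0, where L(f) = λ² f² − 2λ|∇f|² + |dd^c f|² for f in the λ-eigenspace. Hence the flat metric on any flat complex torus is λ_1-extremal within its Kähler class. -/
open Real Complex

/-- The Wirtinger derivative `∂f/∂z^α` of `f : ℂⁿ → ℂ`. -/
noncomputable def wirtD {n : ℕ} (α : Fin n) (f : EuclideanSpace ℂ (Fin n) → ℂ)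
    (z : EuclideanSpace ℂ (Fin n)) : ℂ :=
  (1 / 2) * (fderiv ℝ f z (EuclideanSpace.single α 1)
    - Complex.I * fderiv ℝ f z (Complex.I • EuclideanSpace.single α 1))

/-- The conjugate Wirtinger derivative `∂f/∂z̄^α`. -/
noncomputable def wirtDbar {n : ℕ} (α : Fin n) (f : EuclideanSpace ℂ (Fin n) → ℂ)
    (z : EuclideanSpace ℂ (Fin n)) : ℂ :=
  (1 / 2) * (fderiv ℝ f z (EuclideanSpace.single α 1)
    + Complex.I * fderiv ℝ f z (Complex.I • EuclideanSpace.single α 1))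

/-- The coefficient of `dz^α ∧ dz̄^β` in `dd^c f = 2i ∂∂̄ f`. -/
noncomputable def ddcCoeff {n : ℕ} (α β : Fin n) (f : EuclideanSpace ℂ (Fin n) → ℂ)
    (z : EuclideanSpace ℂ (Fin n)) : ℂ :=
  2 * Complex.I * wirtD α (fun x => wirtDbar β f x) z

/-- `|∇f|²` for a real function on `ℂⁿ` (flat metric), computed in the real
orthonormal directions `e_α, i e_α`. -/
noncomputable def gradNormSq {n : ℕ} (f : EuclideanSpace ℂ (Fin n) → ℝ)
    (z : EuclideanSpace ℂ (Fin n)) : ℝ :=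
  ∑ α, ((fderiv ℝ f z (EuclideanSpace.single α 1)) ^ 2
    + (fderiv ℝ f z (Complex.I • EuclideanSpace.single α 1)) ^ 2)

/-- The pointwise expression of `L(f) = δ^cδ(f dd^c f)` for a `λ`-eigenfunction `f` on
a flat complex torus: `L(f) = λ² f² - 2λ|∇f|² + |dd^c f|²`
(with `|η|² = 4Σ_{α,β}|η_{αβ̄}|²` for the flat metric). -/
noncomputable def Lfun {n : ℕ} (lam : ℝ) (f : EuclideanSpace ℂ (Fin n) → ℝ)
    (z : EuclideanSpace ℂ (Fin n)) : ℝ :=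
  lam ^ 2 * (f z) ^ 2 - 2 * lam * gradNormSq f z
    + 4 * ∑ α, ∑ β, Complex.normSq (ddcCoeff α β (fun x => ((f x : ℝ) : ℂ)) z)

/-- The eigenfunction `φ_w = √(2/Vol)·cos(2π Σ x^k u^k)` on a flat complex torus. -/
noncomputable def phiW {n : ℕ} (Vol : ℝ) (w z : EuclideanSpace ℂ (Fin n)) : ℝ :=
  Real.sqrt (2 / Vol) * Real.cos (2 * π * Complex.re (inner ℂ z w : ℂ))

/-- The eigenfunction `ψ_w = √(2/Vol)·sin(2π Σ x^k u^k)` on a flat complex torus. -/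
noncomputable def psiW {n : ℕ} (Vol : ℝ) (w z : EuclideanSpace ℂ (Fin n)) : ℝ :=
  Real.sqrt (2 / Vol) * Real.sin (2 * π * Complex.re (inner ℂ z w : ℂ))

/-! Both eigenfunctions are of the form `g ∘ ℓ` for the real linear form `ℓ = 2π Re⟨w, ·⟩`, so each
of their derivatives is `g`, `g'` or `g''` at `ℓ z` times a product of the constants
`s_α = ∂ℓ/∂z^α`. With `λ = 4 Σ |s_α|² = 4π²|w|²` this gives `L(g ∘ ℓ) = λ² (g² - 2 g'² + g''²)`.
For `g = cos` and `g = sin`, where `g'' = -g`, this is `±2λ² (cos² - sin²)`, and the two cancel. -/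

section LinearPhase

variable {n : ℕ} (L : EuclideanSpace ℂ (Fin n) →L[ℝ] ℝ)

/-- `∂L/∂z^α`, a constant since `L` is real linear. -/
noncomputable def wirtSymbol (α : Fin n) : ℂ :=
  (1 / 2) * (L (EuclideanSpace.single α 1)
    - Complex.I * L (Complex.I • EuclideanSpace.single α 1))

lemma wirtSymbol_re (α : Fin n) :
    (wirtSymbol L α).re = L (EuclideanSpace.single α 1) / 2 := by
  simp [wirtSymbol, inv_mul_eq_div]

lemma wirtSymbol_im (α : Fin n) :
    (wirtSymbol L α).im = -L (Complex.I • EuclideanSpace.single α 1) / 2 := by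
  simp [wirtSymbol, neg_div, inv_mul_eq_div]

lemma normSq_wirtSymbol (α : Fin n) :
    Complex.normSq (wirtSymbol L α) =
      (L (EuclideanSpace.single α 1) ^ 2 + L (Complex.I • EuclideanSpace.single α 1) ^ 2) / 4 := by
  rw [Complex.normSq_apply, wirtSymbol_re, wirtSymbol_im]
  ring

lemma fderiv_comp_clm_apply {F : Type*} [NormedAddCommGroup F] [NormedSpace ℝ F]
    {h : ℝ → F} {h' : F} {x : EuclideanSpace ℂ (Fin n)} (hh : HasDerivAt h h' (L x))
    (v : EuclideanSpace ℂ (Fin n)) :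
    fderiv ℝ (h ∘ L) x v = L v • h' := by
  rw [(hh.hasFDerivAt.comp x L.hasFDerivAt).fderiv]
  simp

lemma wirtD_comp_clm {h : ℝ → ℂ} {h' : ℂ} {x : EuclideanSpace ℂ (Fin n)}
    (hh : HasDerivAt h h' (L x)) (α : Fin n) :
    wirtD α (h ∘ L) x = wirtSymbol L α * h' := by
  simp only [wirtD, wirtSymbol, fderiv_comp_clm_apply L hh, Complex.real_smul]
  ring

lemma wirtDbar_comp_clm {h : ℝ → ℂ} {h' : ℂ} {x : EuclideanSpace ℂ (Fin n)}
    (hh : HasDerivAt h h' (L x)) (α : Fin n) :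
    wirtDbar α (h ∘ L) x = starRingEnd ℂ (wirtSymbol L α) * h' := by
  simp only [wirtDbar, wirtSymbol, fderiv_comp_clm_apply L hh, Complex.real_smul, map_mul,
    map_sub, map_div₀, map_one, map_ofNat, Complex.conj_ofReal, Complex.conj_I]
  ring

lemma ddcCoeff_comp_clm {g g₁ g₂ : ℝ → ℝ} (hg : ∀ t, HasDerivAt g (g₁ t) t)
    (hg₁ : ∀ t, HasDerivAt g₁ (g₂ t) t) (α β : Fin n) (z : EuclideanSpace ℂ (Fin n)) :
    ddcCoeff α β (fun x => ((g (L x) : ℝ) : ℂ)) z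
      = 2 * Complex.I * g₂ (L z) * wirtSymbol L α * starRingEnd ℂ (wirtSymbol L β) := by
  have hdbar : (fun x => wirtDbar β (fun y => ((g (L y) : ℝ) : ℂ)) x)
      = (fun t => starRingEnd ℂ (wirtSymbol L β) * g₁ t) ∘ L :=
    funext fun x => wirtDbar_comp_clm L (hg (L x)).ofReal_comp β
  rw [ddcCoeff, hdbar, wirtD_comp_clm L (((hg₁ (L z)).ofReal_comp).const_mul _)]
  ring

lemma gradNormSq_comp_clm {g : ℝ → ℝ} {g' : ℝ} {z : EuclideanSpace ℂ (Fin n)}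
    (hg : HasDerivAt g g' (L z)) :
    gradNormSq (g ∘ L) z = 4 * g' ^ 2 * ∑ α, Complex.normSq (wirtSymbol L α) := by
  simp only [gradNormSq, fderiv_comp_clm_apply L hg, normSq_wirtSymbol, Finset.mul_sum,
    smul_eq_mul]
  exact Finset.sum_congr rfl fun α _ => by ring

lemma Lfun_comp_clm {lam : ℝ} {g g₁ g₂ : ℝ → ℝ}
    (hg : ∀ t, HasDerivAt g (g₁ t) t) (hg₁ : ∀ t, HasDerivAt g₁ (g₂ t) t)
    (hlam : lam = 4 * ∑ α, Complex.normSq (wirtSymbol L α)) (z : EuclideanSpace ℂ (Fin n)) :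
    Lfun lam (g ∘ L) z = lam ^ 2 * (g (L z) ^ 2 - 2 * g₁ (L z) ^ 2 + g₂ (L z) ^ 2) := by
  have hddc : ∀ α β, Complex.normSq (ddcCoeff α β (fun x => ((g (L x) : ℝ) : ℂ)) z)
      = 4 * g₂ (L z) ^ 2 * (Complex.normSq (wirtSymbol L α) * Complex.normSq (wirtSymbol L β)) :=
    fun α β => by
      simp only [ddcCoeff_comp_clm L hg hg₁, map_mul, Complex.normSq_I,
        Complex.normSq_conj, Complex.normSq_ofReal, Complex.normSq_ofNat]
      ring
  rw [Lfun, gradNormSq_comp_clm L (hg (L z))]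
  simp only [Function.comp_apply, hddc, ← Finset.mul_sum, ← Finset.sum_mul]
  rw [hlam]
  ring

end LinearPhase

section Phase

variable {n : ℕ} (w : EuclideanSpace ℂ (Fin n))

noncomputable def phase : EuclideanSpace ℂ (Fin n) →L[ℝ] ℝ :=
  (2 * π) • Complex.reCLM.comp ((innerSL ℂ w).restrictScalars ℝ)

lemma phase_apply (v : EuclideanSpace ℂ (Fin n)) :
    phase w v = 2 * π * (inner ℂ w v).re := by
  simp [phase]

lemma phase_single (α : Fin n) :
    phase w (EuclideanSpace.single α 1) = 2 * π * (w α).re := by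
  simp [phase_apply, EuclideanSpace.inner_single_right]

lemma phase_I_smul_single (α : Fin n) :
    phase w (Complex.I • EuclideanSpace.single α 1) = 2 * π * (w α).im := by
  simp [phase_apply, EuclideanSpace.inner_single_right]

lemma wirtSymbol_phase (α : Fin n) :
    wirtSymbol (phase w) α = π * starRingEnd ℂ (w α) := by
  apply Complex.ext
  · rw [wirtSymbol_re, phase_single, Complex.re_ofReal_mul, Complex.conj_re]
    ring
  · rw [wirtSymbol_im, phase_I_smul_single, Complex.im_ofReal_mul, Complex.conj_im]
    ring

lemma four_mul_sum_normSq_wirtSymbol_phase :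
    4 * ∑ α, Complex.normSq (wirtSymbol (phase w) α) = 4 * π ^ 2 * ‖w‖ ^ 2 := by
  simp only [wirtSymbol_phase, map_mul, Complex.normSq_conj, Complex.normSq_ofReal,
    EuclideanSpace.norm_sq_eq, Complex.sq_norm, Finset.mul_sum]
  exact Finset.sum_congr rfl fun α _ => by ring

lemma re_inner_eq_phase (z : EuclideanSpace ℂ (Fin n)) :
    2 * π * (inner ℂ z w).re = phase w z := by
  rw [phase_apply, ← inner_conj_symm z w, Complex.conj_re]

lemma phiW_eq_comp_phase (Vol : ℝ) :
    phiW Vol w = (fun t => √(2 / Vol) * Real.cos t) ∘ phase w :=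
  funext fun z => by rw [phiW, re_inner_eq_phase]; rfl

lemma psiW_eq_comp_phase (Vol : ℝ) :
    psiW Vol w = (fun t => √(2 / Vol) * Real.sin t) ∘ phase w :=
  funext fun z => by rw [psiW, re_inner_eq_phase]; rfl

theorem Lfun_phiW_add_Lfun_psiW (Vol lam : ℝ)
    (hlam : lam = 4 * π ^ 2 * ‖w‖ ^ 2) (z : EuclideanSpace ℂ (Fin n)) :
    Lfun lam (phiW Vol w) z + Lfun lam (psiW Vol w) z = 0 := by
  have hlam' := hlam.trans (four_mul_sum_normSq_wirtSymbol_phase w).symm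
  set c := √(2 / Vol)
  have hcos : ∀ t, HasDerivAt (fun t => c * Real.cos t) (-(c * Real.sin t)) t := fun t => by
    simpa using (Real.hasDerivAt_cos t).const_mul c
  have hsin : ∀ t, HasDerivAt (fun t => c * Real.sin t) (c * Real.cos t) t :=
    fun t => (Real.hasDerivAt_sin t).const_mul c
  have hnsin : ∀ t, HasDerivAt (fun t => -(c * Real.sin t)) (-(c * Real.cos t)) t :=
    fun t => (hsin t).neg
  rw [phiW_eq_comp_phase, psiW_eq_comp_phase, Lfun_comp_clm _ hcos hnsin hlam',
    Lfun_comp_clm _ hsin hcos hlam']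
  ring

end Phase

theorem stmt_14_general (n : ℕ) (Vol : ℝ)
    (dualΓ : Set (EuclideanSpace ℂ (Fin n)))
    (lam1 : ℝ)
    (hattain : ∃ w ∈ dualΓ, lam1 = 4 * π ^ 2 * ‖w‖ ^ 2)
    (IsFirstEigen : (EuclideanSpace ℂ (Fin n) → ℝ) → Prop)
    (hfe : ∀ w ∈ dualΓ, lam1 = 4 * π ^ 2 * ‖w‖ ^ 2 →
      IsFirstEigen (phiW Vol w) ∧ IsFirstEigen (psiW Vol w))
    (ExtremalWithinKaehlerClass : Prop)
    (hAJK : (∃ (N : ℕ) (F : Fin N → EuclideanSpace ℂ (Fin n) → ℝ),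
        (∀ j, IsFirstEigen (F j)) ∧ ∀ z, (∑ j, Lfun lam1 (F j) z) = 0) →
      ExtremalWithinKaehlerClass) :
    (∀ (w : EuclideanSpace ℂ (Fin n)), lam1 = 4 * π ^ 2 * ‖w‖ ^ 2 →
      ∀ z, Lfun lam1 (phiW Vol w) z + Lfun lam1 (psiW Vol w) z = 0) ∧
    ExtremalWithinKaehlerClass := by
  refine ⟨fun w hw => Lfun_phiW_add_Lfun_psiW w Vol lam1 hw, hAJK ?_⟩
  obtain ⟨w, hw, hlam⟩ := hattain
  obtain ⟨hphi, hpsi⟩ := hfe w hw hlam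
  refine ⟨2, ![phiW Vol w, psiW Vol w], Fin.forall_fin_two.2 ⟨hphi, hpsi⟩, fun z => ?_⟩
  simpa [Fin.sum_univ_two] using Lfun_phiW_add_Lfun_psiW w Vol lam1 hlam z

/-- On a flat complex torus `ℂⁿ/Γ` of volume `Vol`, for each `w ∈ Γ*`
with eigenvalue `λ = 4π²|w|²` the pair of eigenfunctions `φ_w, ψ_w` satisfies
`L(φ_w) + L(ψ_w) = 0`, where `L(f) = λ²f² - 2λ|∇f|² + |dd^c f|²`.  Hence, by the
theorem of Apostolov–Jakobson–Kokarev (hypothesis `hAJK`: if some finite collection of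
first eigenfunctions satisfies `Σ_j L(f_j) = 0`, then the metric is λ₁-extremal within
its Kähler class), the flat metric on any flat complex torus is λ₁-extremal within its
Kähler class. -/
theorem stmt_14 (n : ℕ) (hn : 0 < n) (Vol : ℝ) (hVol : 0 < Vol)
    (dualΓ : Set (EuclideanSpace ℂ (Fin n)))
    (lam1 : ℝ) (hlam1 : 0 < lam1)
    (hattain : ∃ w ∈ dualΓ, lam1 = 4 * π ^ 2 * ‖w‖ ^ 2)
    (IsFirstEigen : (EuclideanSpace ℂ (Fin n) → ℝ) → Prop)
    (hfe : ∀ w ∈ dualΓ, lam1 = 4 * π ^ 2 * ‖w‖ ^ 2 →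
      IsFirstEigen (phiW Vol w) ∧ IsFirstEigen (psiW Vol w))
    (ExtremalWithinKaehlerClass : Prop)
    (hAJK : (∃ (N : ℕ) (F : Fin N → EuclideanSpace ℂ (Fin n) → ℝ),
        (∀ j, IsFirstEigen (F j)) ∧ ∀ z, (∑ j, Lfun lam1 (F j) z) = 0) →
      ExtremalWithinKaehlerClass) :
    (∀ (w : EuclideanSpace ℂ (Fin n)), lam1 = 4 * π ^ 2 * ‖w‖ ^ 2 →
      ∀ z, Lfun lam1 (phiW Vol w) z + Lfun lam1 (psiW Vol w) z = 0) ∧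
    ExtremalWithinKaehlerClass :=
  stmt_14_general n Vol dualΓ lam1 hattain IsFirstEigen hfe ExtremalWithinKaehlerClass hAJK
end

section
/- Suppose the first eigenvalue of a flat n-dimensional complex torus ℂⁿ/Γ has multiplicity 2 (n ≥ 2), i.e., S(λ_1) = {±w} for a single w ∈ Γ*. Then there is no R ≥ 0 with R w̄^α w^β = 0 for α ≠ β and R|w^α|² = 1 for all α; hence the flat metric is not λ_1-extremal for all volume-preserving Kähler deformations. -/
open Complex

/-- Suppose the first eigenvalue of a flat `n`-dimensional complex torus
`ℂⁿ/Γ` has multiplicity 2 (`n ≥ 2`), i.e. `S(λ₁) = {±w}` for a single `w ∈ Γ*`.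
Then there is no `R ≥ 0` with `R w̄^α w^β = 0` for `α ≠ β` and `R |w^α|² = 1` for all `α`;
hence (by the extremality criterion: λ₁-extremality implies the existence of such `R`)
the flat metric is not λ₁-extremal for all volume-preserving Kähler deformations.

Here `dualΓ ⊆ ℂⁿ` is the dual lattice, `lam1` the first eigenvalue, and `IsExtremal`
the proposition that the flat metric is λ₁-extremal for all volume-preserving
deformations of the Kähler metric. -/
theorem stmt_16 (n : ℕ) (hn : 2 ≤ n) (dualΓ : Set (Fin n → ℂ))
    (lam1 : ℝ) (hlam1 : 0 < lam1) (w : Fin n → ℂ) (hw : w ∈ dualΓ)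
    (hweig : lam1 = 4 * Real.pi ^ 2 * ∑ α, Complex.normSq (w α))
    (hmult : ∀ v ∈ dualΓ, lam1 = 4 * Real.pi ^ 2 * ∑ α, Complex.normSq (v α) →
      v = w ∨ v = -w)
    (IsExtremal : Prop)
    (hcriterion : IsExtremal → ∃ R : ℝ, 0 ≤ R ∧
      (∀ α β : Fin n, α ≠ β → (R : ℂ) * (starRingEnd ℂ) (w α) * w β = 0) ∧
      (∀ α : Fin n, R * Complex.normSq (w α) = 1)) :
    (¬ ∃ R : ℝ, 0 ≤ R ∧
      (∀ α β : Fin n, α ≠ β → (R : ℂ) * (starRingEnd ℂ) (w α) * w β = 0) ∧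
      (∀ α : Fin n, R * Complex.normSq (w α) = 1)) ∧ ¬ IsExtremal := by
  have key : ¬ ∃ R : ℝ, 0 ≤ R ∧
      (∀ α β : Fin n, α ≠ β → (R : ℂ) * (starRingEnd ℂ) (w α) * w β = 0) ∧
      (∀ α : Fin n, R * Complex.normSq (w α) = 1) := by
    rintro ⟨R, hR0, hoff, hdiag⟩
    set a : Fin n := ⟨0, by omega⟩
    set b : Fin n := ⟨1, by omega⟩
    have iab : a ≠ b := by
      intro h
      have := congrArg Fin.val h
      simp [a, b] at this
    have hR : (R : ℂ) ≠ 0 := by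
      intro h
      have := hdiag a
      rw [show R = 0 from by exact_mod_cast h] at this
      simp at this
    have hwa : w a ≠ 0 := by
      intro h
      have := hdiag a
      rw [h] at this
      simp at this
    have hwb : w b ≠ 0 := by
      intro h
      have := hdiag b
      rw [h] at this
      simp at this
    have := hoff a b iab
    have hc : (starRingEnd ℂ) (w a) ≠ 0 := by simpa using hwa
    exact (mul_ne_zero (mul_ne_zero hR hc) hwb) this
  exact ⟨key, fun hE => key (hcriterion hE)⟩
end
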